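/- arXiv:2011.11425 — 2 statements merged into one kernel-verified Lean document; each statement's English description precedes it below -/
import Mathlib

section
/- Let D be a countable set, L a linear order, and ⟨g_α : α < ω₃⟩ a sequence of functions g_α : D → L such that for all α < β < ω₃ the set {o ∈ D : g_β(o) < g_α(o)} is finite. Then there is a club C of ω₃ such that either for all β < γ both in C the set {o ∈ D : g_β(o) ≠ g_γ(o)} is finite, or for all β < γ both in C the set {o ∈ D : g_β(o) ≠ g_γ(o)} is infinite. -/
open Cardinal

/-- `C` is a club (closed unbounded set) in the regular uncountable cardinal `κ`,
identified with the set of ordinals below it. -/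
def IsClubOrd (κ : Ordinal) (C : Set Ordinal) : Prop :=
  C ⊆ Set.Iio κ ∧
  (∀ α < κ, ∃ β ∈ C, α < β) ∧
  (∀ δ < κ, Order.IsSuccLimit δ → δ = sSup (C ∩ Set.Iio δ) → δ ∈ C)

/-!
Equality modulo finite is convex along a sequence that increases modulo finite: if `g a` and
`g b` agree modulo finite, so do `g a'` and `g b'` for all `a < a' < b' < b`. Hence either some
`α < ω₃` agrees modulo finite with cofinally many later indices, and then the whole tail above `α`
is pairwise equal modulo finite; or every `α` differs on an infinite set from all indices above
some bound `f α < ω₃`, and then any two members of the club of ordinals closed under `f` differ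
on an infinite set. That club is unbounded because `ω₃` is regular and uncountable.
-/

open Filter Order Set

lemma exists_mem_Ioo_of_eq_sSup_inter_Iio {C : Set Ordinal} {α δ : Ordinal}
    (hδ : δ = sSup (C ∩ Iio δ)) (hα : α < δ) : ∃ c ∈ C, α < c ∧ c < δ := by
  rw [hδ] at hα
  obtain ⟨c, ⟨hcC, hcδ⟩, hαc⟩ := (lt_csSup_iff' ⟨δ, fun _ h => h.2.le⟩).1 hα
  exact ⟨c, hcC, hαc, hcδ⟩

lemma isClubOrd_Ioo {κ α : Ordinal} (hκ : IsSuccLimit κ) (hα : α < κ) :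
    IsClubOrd κ (Ioo α κ) := by
  refine ⟨fun _ h => h.2, fun a ha => ?_, fun δ hδ hlim hsup => ⟨?_, hδ⟩⟩
  · refine ⟨succ (max a α), ⟨?_, hκ.succ_lt (max_lt ha hα)⟩, ?_⟩ <;>
      exact lt_succ_of_le (by simp)
  · obtain ⟨c, hc, -, hcδ⟩ := exists_mem_Ioo_of_eq_sSup_inter_Iio hsup hlim.bot_lt
    exact hc.1.trans hcδ

def closedUnder (f : Ordinal → Ordinal) (κ : Ordinal) : Set Ordinal :=
  {δ | δ < κ ∧ ∀ α < δ, f α < δ}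

lemma mem_closedUnder_of_eq_sSup (f : Ordinal → Ordinal) {κ δ : Ordinal} (hδκ : δ < κ)
    (hδ : δ = sSup (closedUnder f κ ∩ Iio δ)) : δ ∈ closedUnder f κ := by
  refine ⟨hδκ, fun α hα => ?_⟩
  obtain ⟨c, hc, hαc, hcδ⟩ := exists_mem_Ioo_of_eq_sSup_inter_Iio hδ hα
  exact (hc.2 α hαc).trans hcδ

lemma exists_mem_closedUnder_gt {c : Cardinal} (hc : c.IsRegular) (hc₀ : c ≠ ℵ₀)
    {f : Ordinal → Ordinal} (hf : ∀ α < c.ord, f α < c.ord) {a : Ordinal} (ha : a < c.ord) :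
    ∃ δ ∈ closedUnder f c.ord, a < δ := by
  -- `h x` strictly bounds `f` on `Iio x`, so every fixed point of `h` is closed under `f`.
  let h : Ordinal → Ordinal := fun x => ⨆ α : Iio x, f α + 1
  have hh : ∀ x < c.ord, h x < c.ord := fun x hx => by
    refine Ordinal.lift_iSup_add_one_lt_of_lt_cof ?_ fun α => hf α (α.2.trans hx)
    rw [mk_Iio_ordinal, ← Ordinal.lift_cof, hc.cof_ord, lift_lift, lift_lt]
    exact lt_ord.1 hx
  have hκ : IsSuccLimit c.ord := isSuccLimit_ord hc.aleph0_le
  refine ⟨Ordinal.nfp h (succ a), ⟨nfp_lt_ord_of_isRegular hc hc₀ hh (hκ.succ_lt ha),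
    fun α hα => ?_⟩, (lt_succ a).trans_le (Ordinal.le_nfp h _)⟩
  obtain ⟨n, hn⟩ := Ordinal.lt_nfp_iff.1 hα
  calc f α < f α + 1 := lt_add_one _
    _ ≤ h (h^[n] (succ a)) := Ordinal.le_iSup (fun β : Iio _ => f β + 1) ⟨α, hn⟩
    _ = h^[n + 1] (succ a) := (Function.iterate_succ_apply' h n _).symm
    _ ≤ _ := Ordinal.iterate_le_nfp h _ _

lemma isClubOrd_closedUnder {c : Cardinal} (hc : c.IsRegular) (hc₀ : c ≠ ℵ₀)
    {f : Ordinal → Ordinal} (hf : ∀ α < c.ord, f α < c.ord) :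
    IsClubOrd c.ord (closedUnder f c.ord) :=
  ⟨fun _ h => h.1, fun _ ha => exists_mem_closedUnder_gt hc hc₀ hf ha,
    fun _ hδ _ hsup => mem_closedUnder_of_eq_sSup f hδ hsup⟩

theorem exists_isClubOrd_forall_or_forall_not {c : Cardinal} (hc : c.IsRegular) (hc₀ : c ≠ ℵ₀)
    {R : Ordinal → Ordinal → Prop}
    (hR : ∀ a a' b' b, a < a' → a' < b' → b' < b → b < c.ord → R a b → R a' b') :
    ∃ C, IsClubOrd c.ord C ∧
      ((∀ β ∈ C, ∀ γ ∈ C, β < γ → R β γ) ∨ (∀ β ∈ C, ∀ γ ∈ C, β < γ → ¬ R β γ)) := by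
  have hκ : IsSuccLimit c.ord := isSuccLimit_ord hc.aleph0_le
  by_cases hcase : ∃ α < c.ord, ∀ B < c.ord, ∃ β, B < β ∧ β < c.ord ∧ R α β
  · obtain ⟨α, hα, hαR⟩ := hcase
    refine ⟨Ioo α c.ord, isClubOrd_Ioo hκ hα, Or.inl fun β hβ γ hγ hβγ => ?_⟩
    obtain ⟨β', hγβ', hβ', hαβ'⟩ := hαR γ hγ.2
    exact hR α β γ β' hβ.1 hβγ hγβ' hβ' hαβ'
  · push Not at hcase
    have hbound : ∀ α, ∃ B < c.ord, α < c.ord → ∀ β, B < β → β < c.ord → ¬ R α β := fun α =>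
      if hα : α < c.ord then (hcase α hα).imp fun _ ⟨hB, hBR⟩ => ⟨hB, fun _ => hBR⟩
      else ⟨0, hκ.bot_lt, fun h => absurd h hα⟩
    choose f hf hfR using hbound
    exact ⟨closedUnder f c.ord, isClubOrd_closedUnder hc hc₀ fun α _ => hf α,
      Or.inr fun β hβ γ hγ hβγ => hfR β hβ.1 γ (hγ.2 β hβγ) hγ.1⟩

lemma Filter.EventuallyEq.squeeze_of_eventuallyLE {ι D L : Type*} [Preorder ι] [PartialOrder L]
    {l : Filter D} {g : ι → D → L} {κ : ι} (hg : ∀ α β, α < β → β < κ → g α ≤ᶠ[l] g β)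
    {a a' b' b : ι} (ha : a < a') (hab' : a' < b') (hb : b' < b) (hbκ : b < κ)
    (heq : g a =ᶠ[l] g b) : g a' =ᶠ[l] g b' :=
  (hg a' b' hab' (hb.trans hbκ)).antisymm <|
    ((hg b' b hb hbκ).trans heq.symm.le).trans (hg a a' ha ((hab'.trans hb).trans hbκ))

theorem club_dichotomy_mod_finite_general (D : Type*) (L : Type*) [LinearOrder L]
    (g : Ordinal → D → L)
    (hg : ∀ α β : Ordinal, α < β → β < (aleph 3).ord → {o : D | g β o < g α o}.Finite) :
    ∃ C : Set Ordinal, IsClubOrd (aleph 3).ord C ∧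
      ((∀ β ∈ C, ∀ γ ∈ C, β < γ → {o : D | g β o ≠ g γ o}.Finite) ∨
       (∀ β ∈ C, ∀ γ ∈ C, β < γ → {o : D | g β o ≠ g γ o}.Infinite)) := by
  have hreg : (aleph 3).IsRegular := by
    rw [show (3 : Ordinal) = 2 + 1 by norm_num]
    exact isRegular_aleph_add_one 2
  have hmono : ∀ α β, α < β → β < (aleph 3).ord → g α ≤ᶠ[cofinite] g β := fun α β h hβ => by
    simpa [EventuallyLE, eventually_cofinite] using hg α β h hβ
  have huncountable : aleph 3 ≠ ℵ₀ := (aleph0_lt_aleph.2 (by norm_num)).ne'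
  obtain ⟨C, hC, hdich⟩ := exists_isClubOrd_forall_or_forall_not hreg huncountable
    fun _ _ _ _ ha hab hb hbκ => EventuallyEq.squeeze_of_eventuallyLE hmono ha hab hb hbκ
  refine ⟨C, hC, hdich.imp (fun h β hβ γ hγ hβγ => ?_) (fun h β hβ γ hγ hβγ => ?_)⟩
  · exact eventually_cofinite.1 (h β hβ γ hγ hβγ)
  · exact mt eventually_cofinite.2 (h β hβ γ hγ hβγ)

/-- If ⟨g_α : α < ω₃⟩ is a sequence of functions from a countable set `D` into a linear
order `L` which is increasing modulo finite, then there is a club `C` of ω₃ on which the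
sequence is either constant modulo finite or strictly increasing modulo finite (any two
distinct members of `C` index functions differing on a finite, resp. infinite, set). -/
theorem club_dichotomy_mod_finite (D : Type*) [Countable D] (L : Type*) [LinearOrder L]
    (g : Ordinal → D → L)
    (hg : ∀ α β : Ordinal, α < β → β < (aleph 3).ord → {o : D | g β o < g α o}.Finite) :
    ∃ C : Set Ordinal, IsClubOrd (aleph 3).ord C ∧
      ((∀ β ∈ C, ∀ γ ∈ C, β < γ → {o : D | g β o ≠ g γ o}.Finite) ∨
       (∀ β ∈ C, ∀ γ ∈ C, β < γ → {o : D | g β o ≠ g γ o}.Infinite)) :=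
  club_dichotomy_mod_finite_general D L g hg
end

section
/- There exist a stationary set S ⊆ {δ < ω₂ : cf(δ) = ω} and a sequence ⟨C_δ : δ ∈ S⟩ such that each C_δ is an unbounded subset of δ of order type ω, and for every club C of ω₂ the set {δ ∈ S : C_δ ⊆ C} is stationary in ω₂. -/
/-!
Fix for every `δ < κ` of cofinality `ω` an increasing sequence `c_δ` cofinal in `δ`. A club `X`
yields a candidate: at each limit point `δ` of `X` of cofinality `ω`, the ladder of the drops
`sup (X ∩ c_δ n)`, which lie in `X`. If no candidate guesses clubs, each club `X` has a club `D X`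
such that no `δ ∈ D X` has its `X`-ladder inside `D X`. Iterate `X ↦ D X` along `ω₁`, intersecting
at every stage, and take a limit point `δ` of cofinality `ω` of the final club. The drops at `δ`
can only decrease along the iteration, so they are constant on some step `i → i + 1`; then the
ladder built from `X_i` lies in `X_{i+1} ⊆ D X_i`, although `δ ∈ D X_i`.
-/

open Cardinal

/-- `C` is a club (closed unbounded set) in the regular uncountable cardinal `κ`,
identified with the set of ordinals below it. -/
def IsClubBelow (κ : Ordinal) (C : Set Ordinal) : Prop :=
  C ⊆ Set.Iio κ ∧
  (∀ α < κ, ∃ β ∈ C, α < β) ∧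
  (∀ δ < κ, Order.IsSuccLimit δ → δ = sSup (C ∩ Set.Iio δ) → δ ∈ C)

/-- `S` is stationary in `κ`: it meets every club of `κ`. -/
def IsStationaryBelow (κ : Ordinal) (S : Set Ordinal) : Prop :=
  ∀ C : Set Ordinal, IsClubBelow κ C → (S ∩ C).Nonempty

open Set Order
open scoped Ordinal

universe u v

def IsCofinalBelow (δ : Ordinal.{u}) (E : Set Ordinal.{u}) : Prop :=
  ∀ α < δ, ∃ β ∈ E, α < β ∧ β < δ

variable {κ δ : Ordinal.{u}} {C E F X : Set Ordinal.{u}}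

theorem eq_sSup_inter_Iio_iff : δ = sSup (E ∩ Iio δ) ↔ IsCofinalBelow δ E := by
  refine ⟨fun h α hα => ?_, fun h => le_antisymm ?_ (csSup_le' fun _ hx => hx.2.le)⟩
  · obtain ⟨β, hβ, hαβ⟩ := exists_lt_of_lt_csSup' (h ▸ hα)
    exact ⟨β, hβ.1, hαβ, hβ.2⟩
  · refine le_of_forall_lt fun α hα => ?_
    obtain ⟨β, hβE, hαβ, hβδ⟩ := h α hα
    exact hαβ.trans_le (le_csSup (bddAbove_Iio.mono inter_subset_right) ⟨hβE, hβδ⟩)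

theorem IsCofinalBelow.mono (h : IsCofinalBelow δ E) (hEF : E ⊆ F) : IsCofinalBelow δ F :=
  fun α hα => (h α hα).imp fun _ hβ => ⟨hEF hβ.1, hβ.2⟩

theorem IsCofinalBelow.isSuccLimit (h : IsCofinalBelow δ E) (hδ : δ ≠ 0) : IsSuccLimit δ := by
  refine Ordinal.isSuccLimit_iff.2 ⟨hδ, isSuccPrelimit_of_succ_lt fun α hα => ?_⟩
  obtain ⟨β, -, hαβ, hβδ⟩ := h α hα
  exact (succ_le_of_lt hαβ).trans_lt hβδ

theorem IsClubBelow.isCofinalBelow (hC : IsClubBelow κ C) : IsCofinalBelow κ C :=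
  fun α hα => (hC.2.1 α hα).imp fun _ hβ => ⟨hβ.1, hβ.2, hC.1 hβ.1⟩

theorem IsClubBelow.mem_of_isCofinalBelow (hC : IsClubBelow κ C) (hδκ : δ < κ) (hδ : δ ≠ 0)
    (h : IsCofinalBelow δ C) : δ ∈ C :=
  hC.2.2 δ hδκ (h.isSuccLimit hδ) (eq_sSup_inter_Iio_iff.2 h)

theorem IsClubBelow.of_isCofinalBelow (hC : C ⊆ Iio κ) (hcof : IsCofinalBelow κ C)
    (hcl : ∀ δ < κ, δ ≠ 0 → IsCofinalBelow δ C → δ ∈ C) : IsClubBelow κ C :=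
  ⟨hC, fun α hα => (hcof α hα).imp fun _ hβ => ⟨hβ.1, hβ.2.1⟩,
    fun δ hδ hlim h => hcl δ hδ hlim.ne_bot (eq_sSup_inter_Iio_iff.1 h)⟩

/-- If the supremum is not attained, it is a limit of points of `C`. -/
theorem IsClubBelow.sSup_inter_Iio_mem (hC : IsClubBelow κ C) (hδ : δ < κ)
    (hne : (C ∩ Iio δ).Nonempty) : sSup (C ∩ Iio δ) ∈ C := by
  have hbdd : BddAbove (C ∩ Iio δ) := bddAbove_Iio.mono inter_subset_right
  by_cases hmem : sSup (C ∩ Iio δ) ∈ C ∩ Iio δ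
  · exact hmem.1
  have hlt : ∀ x ∈ C ∩ Iio δ, x < sSup (C ∩ Iio δ) := fun x hx =>
    (le_csSup hbdd hx).lt_of_ne fun h => hmem (h ▸ hx)
  obtain ⟨x, hx⟩ := hne
  refine hC.mem_of_isCofinalBelow ((csSup_le' fun _ hy => hy.2.le).trans_lt hδ)
    (hlt x hx).ne_bot fun α hα => ?_
  obtain ⟨β, hβ, hαβ⟩ := exists_lt_of_lt_csSup' hα
  exact ⟨β, hβ.1, hαβ, hlt β hβ⟩

theorem Ordinal.ne_zero_of_cof_eq_aleph0 {o : Ordinal.{u}} (h : o.cof = ℵ₀) : o ≠ 0 := by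
  rintro rfl
  rw [Ordinal.cof_zero] at h
  exact aleph0_ne_zero h.symm

/-- Closing off: iterate `ω` times the map raising `ξ` past one point of each `f i` above `ξ`. -/
theorem exists_cof_eq_aleph0_forall_isCofinalBelow (hκ : ℵ₀ < κ.cof) {ι : Type v}
    {f : ι → Set Ordinal.{u}} (hι : Cardinal.lift.{u} #ι < Cardinal.lift.{v} κ.cof)
    (hf : ∀ i, IsCofinalBelow κ (f i)) {α : Ordinal.{u}} (hα : α < κ) :
    ∃ β, α < β ∧ β < κ ∧ β.cof = ℵ₀ ∧ ∀ i, IsCofinalBelow β (f i) := by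
  have hκlim : IsSuccLimit κ := Ordinal.one_lt_cof_iff.1 (one_lt_aleph0.trans hκ)
  choose pick hpick using fun i ξ => show ∃ β, ξ < κ → β ∈ f i ∧ ξ < β ∧ β < κ from
    if h : ξ < κ then (hf i ξ h).imp fun _ hβ _ => hβ else ⟨0, fun h' => absurd h' h⟩
  set g : Ordinal.{u} → Ordinal.{u} := fun ξ => succ (max ξ (⨆ i, pick i ξ))
  have hg : ∀ ξ < κ, ξ < g ξ ∧ g ξ < κ ∧ ∀ i, pick i ξ < g ξ := by
    intro ξ hξ
    have hbdd : BddAbove (range (pick · ξ)) :=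
      ⟨κ, forall_mem_range.2 fun i => (hpick i ξ hξ).2.2.le⟩
    have hsup : ⨆ i, pick i ξ < κ := by
      refine Ordinal.lift_iSup_lt_of_lt_cof ?_ fun i => (hpick i ξ hξ).2.2
      rwa [← Ordinal.lift_cof]
    refine ⟨(le_max_left _ _).trans_lt (lt_succ _), hκlim.succ_lt (max_lt hξ hsup),
      fun i => ((le_ciSup hbdd i).trans (le_max_right _ _)).trans_lt (lt_succ _)⟩
  set x : ℕ → Ordinal.{u} := fun n => g^[n] α
  have hx_succ : ∀ n, x (n + 1) = g (x n) := fun n => Function.iterate_succ_apply' g n α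
  have hxκ : ∀ n, x n < κ := by
    intro n
    induction n with
    | zero => exact hα
    | succ n ih => rw [hx_succ]; exact (hg _ ih).2.1
  have hx : StrictMono x := strictMono_nat_of_lt_succ fun n => hx_succ n ▸ (hg _ (hxκ n)).1
  have hxβ : ∀ n, x n < ⨆ m, x m := fun n =>
    (hx (Nat.lt_succ_self n)).trans_le (Ordinal.le_iSup x (n + 1))
  refine ⟨⨆ n, x n, hxβ 0, ?_, ?_, fun i a ha => ?_⟩
  · refine Ordinal.lift_iSup_lt_of_lt_cof ?_ hxκ
    simpa using hκ
  · simpa using Ordinal.lift_cof_iSup.{u, 0} hx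
  · obtain ⟨n, hn⟩ := Ordinal.lt_iSup_iff.1 ha
    have h := (hg _ (hxκ n)).2.2 i
    rw [← hx_succ] at h
    exact ⟨pick i (x n), (hpick i _ (hxκ n)).1, hn.trans (hpick i _ (hxκ n)).2.1,
      h.trans (hxβ (n + 1))⟩

theorem IsCofinalBelow.exists_cof_eq_aleph0 (hκ : ℵ₀ < κ.cof) (hE : IsCofinalBelow κ E)
    {α : Ordinal.{u}} (hα : α < κ) :
    ∃ β, α < β ∧ β < κ ∧ β.cof = ℵ₀ ∧ IsCofinalBelow β E := by
  obtain ⟨β, hαβ, hβκ, hβ, hβE⟩ := exists_cof_eq_aleph0_forall_isCofinalBelow hκ (ι := Unit)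
    (by simpa using one_lt_aleph0.trans hκ) (fun _ => hE) hα
  exact ⟨β, hαβ, hβκ, hβ, hβE ()⟩

theorem IsClubBelow.iInter (hκ : ℵ₀ < κ.cof) {ι : Type v} {f : ι → Set Ordinal.{u}}
    (hι : Cardinal.lift.{u} #ι < Cardinal.lift.{v} κ.cof) (hf : ∀ i, IsClubBelow κ (f i)) :
    IsClubBelow κ (Iio κ ∩ ⋂ i, f i) := by
  refine .of_isCofinalBelow inter_subset_left (fun α hα => ?_) fun δ hδκ hδ h =>
    ⟨hδκ, mem_iInter.2 fun i => (hf i).mem_of_isCofinalBelow hδκ hδ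
      (h.mono fun _ hx => mem_iInter.1 hx.2 i)⟩
  obtain ⟨β, hαβ, hβκ, hβ, hβf⟩ :=
    exists_cof_eq_aleph0_forall_isCofinalBelow hκ hι (fun i => (hf i).isCofinalBelow) hα
  exact ⟨β, ⟨hβκ, mem_iInter.2 fun i => (hf i).mem_of_isCofinalBelow hβκ
    (Ordinal.ne_zero_of_cof_eq_aleph0 hβ) (hβf i)⟩, hαβ, hβκ⟩

theorem IsClubBelow.inter (hκ : ℵ₀ < κ.cof) (hC : IsClubBelow κ C) (hE : IsClubBelow κ E) :
    IsClubBelow κ (C ∩ E) := by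
  have h := IsClubBelow.iInter hκ (f := fun b : Bool => cond b C E)
    (by simpa using (natCast_lt_aleph0 (n := 2)).trans hκ) (fun b => by cases b <;> assumption)
  rwa [← inter_eq_iInter, inter_eq_right.2 (inter_subset_left.trans hC.1)] at h

theorem exists_monotone_cofinal_of_cof_eq_aleph0 (hδ : δ.cof = ℵ₀) :
    ∃ c : ℕ → Ordinal.{u}, Monotone c ∧ (∀ n, c n < δ) ∧ ∀ α < δ, ∃ n, α < c n := by
  obtain ⟨f, hf⟩ := Ordinal.exists_isFundamentalSeq (show δ.cof.ord = ω by rw [hδ, ord_aleph0])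
  have hδlim : IsSuccLimit δ := Ordinal.one_lt_cof_iff.1 (hδ ▸ one_lt_aleph0)
  refine ⟨fun n => f ⟨n, Ordinal.natCast_lt_omega0 n⟩, fun m n hmn => ?_, fun n => (f _).2,
    fun α hα => ?_⟩
  · exact hf.strictMono.monotone (Subtype.mk_le_mk.2 (Nat.cast_le.2 hmn))
  · obtain ⟨_, ⟨⟨i, hi⟩, rfl⟩, hαi⟩ := hf.isCofinal_range ⟨succ α, hδlim.succ_lt hα⟩
    obtain ⟨n, rfl⟩ := Ordinal.lt_omega0.1 hi
    exact ⟨n, succ_le_iff.1 (show succ α ≤ _ from hαi)⟩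

theorem nonempty_orderIso_nat_of_subset_range {α : Type*} [LinearOrder α] {g : ℕ → α}
    (hg : Monotone g) {s : Set α} (hs : s ⊆ range g) (hinf : s.Infinite) :
    Nonempty (s ≃o ℕ) := by
  classical
  set J : Set ℕ := {n | g n ∈ s ∧ ∀ m < n, g m < g n}
  let e : J → s := fun n => ⟨g n, n.2.1⟩
  have he : StrictMono e := fun m n hmn => n.2.2 m hmn
  have he' : Function.Surjective e := by
    rintro ⟨x, hx⟩
    have hex : ∃ n, g n = x := hs hx
    refine ⟨⟨Nat.find hex, (Nat.find_spec hex).symm ▸ hx, fun m hm => ?_⟩,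
      Subtype.ext (Nat.find_spec hex)⟩
    exact (hg hm.le).lt_of_ne fun h => Nat.find_min hex hm (h.trans (Nat.find_spec hex))
  have : Infinite s := hinf.to_subtype
  have : Infinite J := Infinite.of_surjective e he'
  exact ⟨(he.orderIsoOfSurjective e he').symm.trans (Nat.Subtype.orderIsoOfNat J).symm⟩

def IsLadder (δ : Ordinal.{u}) (L : Set Ordinal.{u}) : Prop :=
  L ⊆ Iio δ ∧ (∀ α < δ, ∃ β ∈ L, α < β) ∧ Nonempty (L ≃o ℕ)

theorem IsLadder.of_subset_range {L : Set Ordinal.{u}} {g : ℕ → Ordinal.{u}} (hg : Monotone g)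
    (hL : L ⊆ range g) (hLδ : L ⊆ Iio δ) (hδ : δ ≠ 0) (hcof : ∀ α < δ, ∃ β ∈ L, α < β) :
    IsLadder δ L := by
  refine ⟨hLδ, hcof, nonempty_orderIso_nat_of_subset_range hg hL fun hfin => ?_⟩
  obtain ⟨β, hβ, -⟩ := hcof 0 (pos_iff_ne_zero.2 hδ)
  obtain ⟨γ, hγ, hlt⟩ := hcof _ (hLδ (Nonempty.csSup_mem ⟨β, hβ⟩ hfin))
  exact (le_csSup hfin.bddAbove hγ).not_gt hlt

noncomputable def ladderDrop (E : Set Ordinal.{u}) (c : ℕ → Ordinal.{u}) (n : ℕ) : Ordinal.{u} :=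
  sSup (E ∩ Iio (c n))

/-- The points `sup (E ∩ c n)`, without the junk value `sSup ∅ = 0`. -/
def droppedLadder (E : Set Ordinal.{u}) (c : ℕ → Ordinal.{u}) : Set Ordinal.{u} :=
  range (ladderDrop E c) \ {0}

variable {c : ℕ → Ordinal.{u}}

theorem ladderDrop_le (n : ℕ) : ladderDrop E c n ≤ c n :=
  csSup_le' fun _ hx => hx.2.le

theorem ladderDrop_mono (hEF : E ⊆ F) (n : ℕ) : ladderDrop E c n ≤ ladderDrop F c n :=
  csSup_le_csSup' (bddAbove_Iio.mono inter_subset_right) (inter_subset_inter_left _ hEF)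

theorem monotone_ladderDrop (hc : Monotone c) : Monotone (ladderDrop E c) := fun _ _ hmn =>
  csSup_le_csSup' (bddAbove_Iio.mono inter_subset_right)
    (inter_subset_inter_right _ (Iio_subset_Iio (hc hmn)))

theorem droppedLadder_subset (hE : IsClubBelow κ E) (hc : ∀ n, c n < κ) :
    droppedLadder E c ⊆ E := by
  rintro _ ⟨⟨n, rfl⟩, hn⟩
  refine hE.sSup_inter_Iio_mem (hc n) (nonempty_iff_ne_empty.2 fun h => hn ?_)
  simp [ladderDrop, h]

theorem isLadder_droppedLadder (hc : Monotone c) (hcδ : ∀ n, c n < δ)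
    (hcof : ∀ α < δ, ∃ n, α < c n) (hE : IsCofinalBelow δ E) :
    IsLadder δ (droppedLadder E c) := by
  refine .of_subset_range (monotone_ladderDrop hc) sdiff_subset ?_ (hcδ 0).ne_bot fun α hα => ?_
  · rintro _ ⟨⟨n, rfl⟩, -⟩
    exact (ladderDrop_le n).trans_lt (hcδ n)
  · obtain ⟨β, hβE, hαβ, hβδ⟩ := hE α hα
    obtain ⟨n, hn⟩ := hcof β hβδ
    have hβn : β ≤ ladderDrop E c n := le_csSup (bddAbove_Iio.mono inter_subset_right) ⟨hβE, hn⟩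
    exact ⟨_, ⟨⟨n, rfl⟩, (hαβ.trans_le hβn).ne_bot⟩, hαβ.trans_le hβn⟩

theorem exists_forall_eq_succ_of_antitone {Ω : Ordinal.{u}} (hΩ : ℵ₀ < Ω.cof) {α : Type*}
    [LinearOrder α] [WellFoundedLT α] {f : ℕ → Ordinal.{u} → α} (hf : ∀ n, Antitone (f n)) :
    ∃ i, succ i < Ω ∧ ∀ n, f n i = f n (succ i) := by
  have hΩlim : IsSuccLimit Ω := Ordinal.one_lt_cof_iff.1 (one_lt_aleph0.trans hΩ)
  have hstable : ∀ n, ∃ i < Ω, ∀ j, i ≤ j → j < Ω → f n j = f n i := by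
    intro n
    obtain ⟨_, ⟨i, hiΩ, rfl⟩, hmin⟩ :=
      wellFounded_lt.has_min (f n '' Iio Ω) ⟨_, mem_image_of_mem _ (mem_Iio.2 hΩlim.bot_lt)⟩
    exact ⟨i, hiΩ, fun j hij hjΩ =>
      (hf n hij).antisymm (not_lt.1 (hmin _ (mem_image_of_mem _ hjΩ)))⟩
  choose i hiΩ hi using hstable
  have hsup : ⨆ n, i n < Ω := Ordinal.lift_iSup_lt_of_lt_cof (by simpa using hΩ) hiΩ
  refine ⟨⨆ n, i n, hΩlim.succ_lt hsup, fun n => ?_⟩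
  have hle : i n ≤ ⨆ n, i n := Ordinal.le_iSup i n
  rw [hi n _ hle hsup, hi n _ (hle.trans (le_succ _)) (hΩlim.succ_lt hsup)]

noncomputable def shrinkingSeq (κ : Ordinal.{u}) (D : Set Ordinal.{u} → Set Ordinal.{u}) :
    Ordinal.{u} → Set Ordinal.{u} :=
  Ordinal.lt_wf.fix fun i X => Iio κ ∩ ⋂ j : Iio i, D (X j j.2)

variable {D : Set Ordinal.{u} → Set Ordinal.{u}}

theorem shrinkingSeq_eq (i : Ordinal.{u}) :
    shrinkingSeq κ D i = Iio κ ∩ ⋂ j : Iio i, D (shrinkingSeq κ D j) :=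
  Ordinal.lt_wf.fix_eq _ i

theorem shrinkingSeq_subset {i j : Ordinal.{u}} (hji : j < i) :
    shrinkingSeq κ D i ⊆ D (shrinkingSeq κ D j) := by
  rw [shrinkingSeq_eq i]
  exact fun x hx => mem_iInter.1 hx.2 ⟨j, hji⟩

theorem antitone_shrinkingSeq : Antitone (shrinkingSeq κ D) := by
  intro j i hji x hx
  rw [shrinkingSeq_eq] at hx ⊢
  exact ⟨hx.1, mem_iInter.2 fun k => mem_iInter.1 hx.2 ⟨k, k.2.trans_le hji⟩⟩

theorem isClubBelow_shrinkingSeq (hκ : ℵ₀ < κ.cof)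
    (hD : ∀ X, IsClubBelow κ X → IsClubBelow κ (D X)) {i : Ordinal.{u}} (hi : i.card < κ.cof) :
    IsClubBelow κ (shrinkingSeq κ D i) := by
  induction i using WellFoundedLT.induction with
  | _ i ih =>
    rw [shrinkingSeq_eq]
    refine IsClubBelow.iInter hκ ?_ fun j => hD _ (ih j j.2 ?_)
    · rwa [Cardinal.mk_Iio_ordinal, Cardinal.lift_lift, Cardinal.lift_lt]
    · exact (Ordinal.card_le_card (le_of_lt j.2)).trans_lt hi

def IsClubGuessing (κ : Ordinal.{u}) (S : Set Ordinal.{u}) (Cs : Ordinal.{u} → Set Ordinal.{u}) :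
    Prop :=
  S ⊆ {δ | δ < κ ∧ δ.cof = ℵ₀} ∧ IsStationaryBelow κ S ∧ (∀ δ ∈ S, IsLadder δ (Cs δ)) ∧
    ∀ C, IsClubBelow κ C → IsStationaryBelow κ {δ ∈ S | Cs δ ⊆ C}

def cofAleph0LimitPoints (κ : Ordinal.{u}) (X : Set Ordinal.{u}) : Set Ordinal.{u} :=
  {δ | δ < κ ∧ δ.cof = ℵ₀ ∧ IsCofinalBelow δ X}

theorem isStationaryBelow_cofAleph0LimitPoints (hκ : ℵ₀ < κ.cof) (hX : IsClubBelow κ X) :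
    IsStationaryBelow κ (cofAleph0LimitPoints κ X) := by
  intro F hF
  obtain ⟨δ, -, hδκ, hδ, hδXF⟩ := (hX.inter hκ hF).isCofinalBelow.exists_cof_eq_aleph0 hκ
    (Ordinal.one_lt_cof_iff.1 (one_lt_aleph0.trans hκ)).bot_lt
  exact ⟨δ, ⟨hδκ, hδ, hδXF.mono inter_subset_left⟩, hF.mem_of_isCofinalBelow hδκ
    (Ordinal.ne_zero_of_cof_eq_aleph0 hδ) (hδXF.mono inter_subset_right)⟩

theorem exists_club_of_not_isClubGuessing (hκ : ℵ₀ < κ.cof) {c : Ordinal.{u} → ℕ → Ordinal.{u}}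
    (hc : ∀ δ, δ.cof = ℵ₀ → Monotone (c δ) ∧ (∀ n, c δ n < δ) ∧ ∀ α < δ, ∃ n, α < c δ n)
    (hX : IsClubBelow κ X)
    (hfail : ¬ IsClubGuessing κ (cofAleph0LimitPoints κ X) fun δ => droppedLadder X (c δ)) :
    ∃ D, IsClubBelow κ D ∧
      ∀ δ ∈ cofAleph0LimitPoints κ X, δ ∈ D → ¬ droppedLadder X (c δ) ⊆ D := by
  obtain ⟨C, hC, hCS⟩ : ∃ C, IsClubBelow κ C ∧ ¬ IsStationaryBelow κ
      {δ ∈ cofAleph0LimitPoints κ X | droppedLadder X (c δ) ⊆ C} := by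
    by_contra! h
    refine hfail ⟨fun δ hδ => ⟨hδ.1, hδ.2.1⟩, isStationaryBelow_cofAleph0LimitPoints hκ hX,
      fun δ hδ => ?_, h⟩
    obtain ⟨hcm, hcδ, hcof⟩ := hc δ hδ.2.1
    exact isLadder_droppedLadder hcm hcδ hcof hδ.2.2
  simp only [IsStationaryBelow, not_forall, not_nonempty_iff_eq_empty] at hCS
  obtain ⟨F, hF, hCF⟩ := hCS
  refine ⟨C ∩ F, hC.inter hκ hF, fun δ hδ hδD hsub => ?_⟩
  exact hCF.subset ⟨⟨hδ, hsub.trans inter_subset_left⟩, hδD.2⟩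

theorem exists_isClubGuessing (hκ : ℵ₁ < κ.cof) : ∃ S Cs, IsClubGuessing κ S Cs := by
  classical
  have hκ₀ : ℵ₀ < κ.cof := aleph0_lt_aleph_one.trans hκ
  choose c hc using fun δ : Ordinal.{u} => show ∃ c : ℕ → Ordinal.{u}, δ.cof = ℵ₀ →
      Monotone c ∧ (∀ n, c n < δ) ∧ ∀ α < δ, ∃ n, α < c n from
    if h : δ.cof = ℵ₀ then (exists_monotone_cofinal_of_cof_eq_aleph0 h).imp fun _ hc _ => hc
    else ⟨0, (absurd · h)⟩
  by_contra! hfail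
  choose D hD using fun X => show ∃ D, IsClubBelow κ X → IsClubBelow κ D ∧
      ∀ δ ∈ cofAleph0LimitPoints κ X, δ ∈ D → ¬ droppedLadder X (c δ) ⊆ D from
    if hX : IsClubBelow κ X then
      (exists_club_of_not_isClubGuessing hκ₀ hc hX (hfail _ _)).imp fun _ hD _ => hD
    else ⟨∅, (absurd · hX)⟩
  set X := shrinkingSeq κ D
  have hXclub : ∀ i ≤ ω₁, IsClubBelow κ (X i) := fun i hi =>
    isClubBelow_shrinkingSeq hκ₀ (fun Y hY => (hD Y hY).1)
      ((Ordinal.card_le_card hi).trans_lt (by simpa using hκ))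
  obtain ⟨δ, -, hδκ, hδ, hδX⟩ := (hXclub ω₁ le_rfl).isCofinalBelow.exists_cof_eq_aleph0 hκ₀
    (Ordinal.one_lt_cof_iff.1 (one_lt_aleph0.trans hκ₀)).bot_lt
  obtain ⟨i, hiΩ, hi⟩ := exists_forall_eq_succ_of_antitone (Ω := ω₁)
    (by rw [← ord_aleph, isRegular_aleph_one.cof_ord]; exact aleph0_lt_aleph_one)
    (f := fun n j => ladderDrop (X j) (c δ) n) fun n _ _ hjk => ladderDrop_mono
      (antitone_shrinkingSeq hjk) n
  have hi₁ : i ≤ ω₁ := (le_succ i).trans hiΩ.le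
  have hδXi : IsCofinalBelow δ (X i) := hδX.mono (antitone_shrinkingSeq hi₁)
  have hδD : δ ∈ D (X i) := shrinkingSeq_subset (lt_succ i) (antitone_shrinkingSeq hiΩ.le
    ((hXclub ω₁ le_rfl).mem_of_isCofinalBelow hδκ (Ordinal.ne_zero_of_cof_eq_aleph0 hδ) hδX))
  refine (hD (X i) (hXclub i hi₁)).2 δ ⟨hδκ, hδ, hδXi⟩ hδD ?_
  have hdrop : droppedLadder (X i) (c δ) = droppedLadder (X (succ i)) (c δ) := by
    rw [droppedLadder, droppedLadder, show ladderDrop (X i) (c δ) = _ from funext hi]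
  rw [hdrop]
  exact (droppedLadder_subset (hXclub _ hiΩ.le) fun n => ((hc δ hδ).2.1 n).trans hδκ).trans
    (shrinkingSeq_subset (lt_succ i))

/-- Shelah's club guessing at ω₂: there are a stationary set `S` of ordinals below ω₂ of
cofinality ω and a sequence ⟨C_δ : δ ∈ S⟩, each `C_δ` an unbounded subset of `δ` of order
type ω (order-isomorphic to ℕ), such that every club `C` of ω₂ contains `C_δ` for
stationarily many `δ ∈ S`. -/
theorem club_guessing_omega2 :
    ∃ (S : Set Ordinal) (Cs : Ordinal → Set Ordinal),
      S ⊆ {δ : Ordinal | δ < (aleph 2).ord ∧ δ.cof = aleph0} ∧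
      IsStationaryBelow (aleph 2).ord S ∧
      (∀ δ ∈ S, Cs δ ⊆ Set.Iio δ ∧ (∀ α < δ, ∃ β ∈ Cs δ, α < β) ∧
        Nonempty ((Cs δ) ≃o ℕ)) ∧
      (∀ C : Set Ordinal, IsClubBelow (aleph 2).ord C →
        IsStationaryBelow (aleph 2).ord {δ ∈ S | Cs δ ⊆ C}) := by
  refine exists_isClubGuessing ?_
  rw [← one_add_one_eq_two, (isRegular_aleph_add_one 1).cof_ord]
  exact aleph_lt_aleph.2 (lt_add_one 1)
end
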